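/- arXiv:2107.03628 — 2 statements merged into one kernel-verified Lean document; each statement's English description precedes it below -/
import Mathlib

section
/- Let R be a commutative ring, a ⊆ R an ideal, and M an R-module. Then Ass_R(M/Γ̄_a(M)) ⊇ Ass_R(M) \ var(a) and Ass^f_R(M/Γ̄_a(M)) ⊇ Ass^f_R(M) \ var(a). -/
open Submodule

universe u v

variable {R : Type u} [CommRing R]

/-- The small `a`-torsion submodule `Γ_a(M) = {x | ∃ n, a^n • x = 0}`. -/
def smallTorsion (a : Ideal R) (M : Type v) [AddCommGroup M] [Module R M] :
    Submodule R M where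
  carrier := {x | ∃ n : ℕ, ∀ r ∈ a ^ n, r • x = 0}
  zero_mem' := ⟨0, fun r _ => smul_zero r⟩
  add_mem' := by
    rintro x y ⟨n, hn⟩ ⟨m, hm⟩
    refine ⟨n + m, fun r hr => ?_⟩
    have h1 : r ∈ a ^ n := Ideal.pow_le_pow_right (Nat.le_add_right n m) hr
    have h2 : r ∈ a ^ m := Ideal.pow_le_pow_right (Nat.le_add_left m n) hr
    rw [smul_add, hn r h1, hm r h2, add_zero]
  smul_mem' := by
    rintro c x ⟨n, hn⟩
    exact ⟨n, fun r hr => by rw [smul_comm, hn r hr, smul_zero]⟩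

/-- The large `a`-torsion submodule `Γ̄_a(M) = {x | a ⊆ √(0 : x)}`. -/
def largeTorsion (a : Ideal R) (M : Type v) [AddCommGroup M] [Module R M] :
    Submodule R M where
  carrier := {x | ∀ r ∈ a, ∃ n : ℕ, r ^ n • x = 0}
  zero_mem' := fun r _ => ⟨0, smul_zero _⟩
  add_mem' := by
    rintro x y hx hy r hr
    obtain ⟨n, hn⟩ := hx r hr
    obtain ⟨m, hm⟩ := hy r hr
    refine ⟨n + m, ?_⟩
    have hx' : r ^ (n + m) • x = 0 := by
      rw [pow_add, mul_comm, mul_smul, hn, smul_zero]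
    have hy' : r ^ (n + m) • y = 0 := by
      rw [pow_add, mul_smul, hm, smul_zero]
    rw [smul_add, hx', hy', add_zero]
  smul_mem' := by
    rintro c x hx r hr
    obtain ⟨n, hn⟩ := hx r hr
    exact ⟨n, by rw [smul_comm, hn, smul_zero]⟩

/-- The set of weakly associated primes of `M`: primes minimal over the
annihilator `(0 :_R x)` of some `x ∈ M`. -/
def weakAssPrimes (R : Type u) [CommRing R] (M : Type v) [AddCommGroup M]
    [Module R M] : Set (Ideal R) :=
  {p | ∃ x : M, p ∈ Ideal.minimalPrimes (LinearMap.ker (LinearMap.toSpanSingleton R M x))}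

/-- The variety of an ideal: the set of primes containing it. -/
def varI (a : Ideal R) : Set (Ideal R) := {p | p.IsPrime ∧ a ≤ p}

/-! If `p` is prime and `r ∈ a \ p`, then `s • x ∈ Γ̄_a(M)` gives `r ^ n * s ∈ (0 : x) ⊆ p`,
hence `s ∈ p`. So `(0 : x) ⊆ (Γ̄_a(M) : x) ⊆ p`, i.e. the annihilator of the image of `x` in
`M / Γ̄_a(M)` is squeezed between `(0 : x)` and `p`; both "`p` is the radical of" and
"`p` is minimal over" survive such a squeeze. -/

lemma Ideal.radical_eq_of_le_of_le {I J p : Ideal R} (hp : p.IsPrime) (hI : I.radical = p)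
    (hIJ : I ≤ J) (hJp : J ≤ p) : J.radical = p :=
  le_antisymm (hp.radical_le_iff.mpr hJp) (hI ▸ Ideal.radical_mono hIJ)

lemma Ideal.mem_minimalPrimes_of_le_of_le {I J p : Ideal R} (hp : p ∈ I.minimalPrimes)
    (hIJ : I ≤ J) (hJp : J ≤ p) : p ∈ J.minimalPrimes :=
  ⟨⟨hp.1.1, hJp⟩, fun _ hq hqp => hp.2 ⟨hq.1, hIJ.trans hq.2⟩ hqp⟩

section

variable {M : Type*} [AddCommGroup M] [Module R M]

lemma ker_toSpanSingleton_eq_colon_bot (x : M) :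
    LinearMap.ker (LinearMap.toSpanSingleton R M x) = (⊥ : Submodule R M).colon {x} := by
  ext r
  simp [mem_colon_singleton]

lemma colon_bot_quotient_mk (N : Submodule R M) (x : M) :
    (⊥ : Submodule R (M ⧸ N)).colon {Submodule.Quotient.mk x} = N.colon {x} := by
  ext r
  rw [mem_colon_singleton, mem_colon_singleton, mem_bot, ← Quotient.mk_smul, Quotient.mk_eq_zero]

lemma colon_bot_le_colon (N : Submodule R M) (x : M) :
    (⊥ : Submodule R M).colon {x} ≤ N.colon {x} :=
  colon_mono bot_le le_rfl

lemma colon_largeTorsion_le {a p : Ideal R} (hp : p.IsPrime) (ha : ¬ a ≤ p) {x : M}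
    (hx : (⊥ : Submodule R M).colon {x} ≤ p) : (largeTorsion a M).colon {x} ≤ p := by
  obtain ⟨r, hra, hrp⟩ := SetLike.not_le_iff_exists.mp ha
  intro s hs
  obtain ⟨n, hn⟩ := mem_colon_singleton.mp hs r hra
  have hkill : r ^ n * s ∈ (⊥ : Submodule R M).colon {x} := by
    rw [mem_colon_singleton, mul_smul, hn, mem_bot]
  exact (hp.mem_or_mem (hx hkill)).resolve_left fun h => hrp (hp.mem_of_pow_mem n h)

end

/-- `Ass(M/Γ̄_a(M)) ⊇ Ass(M) \ var(a)` and `Ass^f(M/Γ̄_a(M)) ⊇ Ass^f(M) \ var(a)`. -/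
theorem stmt4 (a : Ideal R) (M : Type v) [AddCommGroup M] [Module R M] :
    associatedPrimes R M \ varI a ⊆ associatedPrimes R (M ⧸ largeTorsion a M) ∧
    weakAssPrimes R M \ varI a ⊆ weakAssPrimes R (M ⧸ largeTorsion a M) := by
  constructor
  · rintro p ⟨⟨hp, x, hx⟩, hpa⟩
    have hxp : (⊥ : Submodule R M).colon {x} ≤ p := hx ▸ Ideal.le_radical
    refine ⟨hp, Submodule.Quotient.mk x, ?_⟩
    rw [colon_bot_quotient_mk]
    exact (Ideal.radical_eq_of_le_of_le hp hx.symm (colon_bot_le_colon _ x)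
      (colon_largeTorsion_le hp (fun h => hpa ⟨hp, h⟩) hxp)).symm
  · rintro p ⟨⟨x, hx⟩, hpa⟩
    rw [ker_toSpanSingleton_eq_colon_bot] at hx
    have hp : p.IsPrime := hx.1.1
    refine ⟨Submodule.Quotient.mk x, ?_⟩
    rw [ker_toSpanSingleton_eq_colon_bot, colon_bot_quotient_mk]
    exact Ideal.mem_minimalPrimes_of_le_of_le hx (colon_bot_le_colon _ x)
      (colon_largeTorsion_le hp (fun h => hpa ⟨hp, h⟩) hx.1.2)
end

section
/- Let R be a commutative ring and a, b ⊆ R ideals such that Γ_a = Γ̄_a and Γ_b = Γ̄_b (as subfunctors of the identity on R-modules). Then Γ_{a+b} = Γ̄_{a+b}. -/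
open Submodule

universe u v

variable {R : Type u} [CommRing R]

theorem smallTorsion_le_largeTorsion (a : Ideal R) (M : Type*) [AddCommGroup M] [Module R M] :
    smallTorsion a M ≤ largeTorsion a M := by
  rintro x ⟨n, hn⟩ r hr
  exact ⟨n, hn _ (Ideal.pow_mem_pow hr n)⟩

theorem smallTorsion_anti {a b : Ideal R} (hab : a ≤ b) (M : Type*) [AddCommGroup M]
    [Module R M] : smallTorsion b M ≤ smallTorsion a M := by
  rintro x ⟨n, hn⟩
  exact ⟨n, fun r hr => hn r (Ideal.pow_right_mono hab n hr)⟩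

theorem largeTorsion_anti {a b : Ideal R} (hab : a ≤ b) (M : Type*) [AddCommGroup M]
    [Module R M] : largeTorsion b M ≤ largeTorsion a M :=
  fun _ hx r hr => hx r (hab hr)

theorem smallTorsion_sup (a b : Ideal R) (M : Type*) [AddCommGroup M] [Module R M] :
    smallTorsion (a ⊔ b) M = smallTorsion a M ⊓ smallTorsion b M := by
  refine le_antisymm (le_inf (smallTorsion_anti le_sup_left M)
    (smallTorsion_anti le_sup_right M)) ?_
  rintro x ⟨⟨n, hn⟩, ⟨m, hm⟩⟩
  refine ⟨n + m, fun r hr => ?_⟩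
  obtain ⟨s, hs, t, ht, rfl⟩ := Submodule.mem_sup.mp (Ideal.sup_pow_add_le_pow_sup_pow hr)
  rw [add_smul, hn s hs, hm t ht, add_zero]

/-- If `Γ_a = Γ̄_a` and `Γ_b = Γ̄_b`, then `Γ_{a+b} = Γ̄_{a+b}`. -/
theorem stmt13 (a b : Ideal R)
    (ha : ∀ (M : Type v) [AddCommGroup M] [Module R M],
        smallTorsion a M = largeTorsion a M)
    (hb : ∀ (M : Type v) [AddCommGroup M] [Module R M],
        smallTorsion b M = largeTorsion b M) :
    ∀ (M : Type v) [AddCommGroup M] [Module R M],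
      smallTorsion (a + b) M = largeTorsion (a + b) M := by
  intro M _ _
  refine le_antisymm (smallTorsion_le_largeTorsion _ M) ?_
  calc largeTorsion (a + b) M
      ≤ largeTorsion a M ⊓ largeTorsion b M :=
        le_inf (largeTorsion_anti le_sup_left M) (largeTorsion_anti le_sup_right M)
    _ = smallTorsion a M ⊓ smallTorsion b M := by rw [ha M, hb M]
    _ = smallTorsion (a + b) M := (smallTorsion_sup a b M).symm
end
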